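/- arXiv:2302.02045 — 2 statements merged into one kernel-verified Lean document; each statement's English description precedes it below -/
import Mathlib

section
/- Let R and R̄ be p×p Hermitian positive definite complex matrices and let y ∈ ℂ^p be nonzero. Let A = R̄^{-1/2} R R̄^{-1/2}, where R̄^{1/2} is the unique Hermitian positive definite square root of R̄, and let κ(A) = λ_max(A)/λ_min(A) be the condition number of A. Then the normalized SCNR satisfies the lower bound ρ ≥ 1 / ((1/4)·(κ(A) + 1/κ(A) + 2)) = 4κ(A)/(κ(A)+1)². -/
open Matrix
open scoped ComplexOrder

/-- Normalized SCNR `ρ = (yᴴ R̄⁻¹ y)² / ((yᴴ R⁻¹ y) (yᴴ R̄⁻¹ R R̄⁻¹ y))`. -/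
noncomputable def scnr {p : ℕ} (R Rb : Matrix (Fin p) (Fin p) ℂ) (y : Fin p → ℂ) : ℝ :=
  ((star y ⬝ᵥ Rb⁻¹ *ᵥ y).re) ^ 2 /
    ((star y ⬝ᵥ R⁻¹ *ᵥ y).re * (star y ⬝ᵥ (Rb⁻¹ * R * Rb⁻¹) *ᵥ y).re)


lemma quad_conj {p : ℕ} (N B : Matrix (Fin p) (Fin p) ℂ) (y : Fin p → ℂ) :
    star y ⬝ᵥ (N * B * star N) *ᵥ y = star (star N *ᵥ y) ⬝ᵥ B *ᵥ (star N *ᵥ y) := by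
  simp [Matrix.star_eq_conjTranspose, Matrix.star_mulVec, Matrix.dotProduct_mulVec,
    Matrix.vecMul_vecMul, Matrix.mul_assoc]

lemma diag_form {p : ℕ} (v : Fin p → ℝ) (c : Fin p → ℂ) :
    (star c ⬝ᵥ (diagonal (fun i => (v i : ℂ))) *ᵥ c).re
      = ∑ i, v i * Complex.normSq (c i) := by
  simp only [dotProduct, mulVec_diagonal, Pi.star_apply]
  rw [Complex.re_sum]
  congr 1; ext i
  have : star (c i) * ((v i : ℂ) * c i) = (v i : ℂ) * (Complex.normSq (c i) : ℂ) := by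
    rw [Complex.star_def]
    rw [show (starRingEnd ℂ) (c i) * ((v i : ℂ) * c i)
        = (v i : ℂ) * (c i * (starRingEnd ℂ) (c i)) by ring, Complex.mul_conj]
  rw [this]
  simp

lemma kantorovich {p : ℕ} (A : Matrix (Fin p) (Fin p) ℂ) (hA : A.PosDef) (x : Fin p → ℂ)
    (M m : ℝ) (hm : 0 < m) (hM : 0 < M)
    (hlo : ∀ i, m ≤ hA.isHermitian.eigenvalues i)
    (hhi : ∀ i, hA.isHermitian.eigenvalues i ≤ M) :
    (star x ⬝ᵥ A⁻¹ *ᵥ x).re * (star x ⬝ᵥ A *ᵥ x).re ≤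
      ((M + m) ^ 2 / (4 * (M * m))) * ((star x ⬝ᵥ x).re) ^ 2 := by
  classical
  set hH := hA.isHermitian with hHdef
  set U : Matrix (Fin p) (Fin p) ℂ := (hH.eigenvectorUnitary : Matrix (Fin p) (Fin p) ℂ) with hU
  set d : Fin p → ℝ := hH.eigenvalues with hd
  have hdpos : ∀ i, 0 < d i := fun i => lt_of_lt_of_le hm (hlo i)
  have hU1 : star U * U = 1 := (Matrix.mem_unitaryGroup_iff').mp (hH.eigenvectorUnitary).2
  have hU2 : U * star U = 1 := (Matrix.mem_unitaryGroup_iff).mp (hH.eigenvectorUnitary).2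
  have hspec : A = U * diagonal (fun i => (d i : ℂ)) * star U := by
    convert hH.spectral_theorem using 3
    rw [Unitary.conjStarAlgAut_apply]
    rfl
  set c : Fin p → ℂ := star U *ᵥ x with hc
  set n : Fin p → ℝ := fun i => Complex.normSq (c i) with hn
  have hDD : diagonal (fun i => (d i : ℂ)) * diagonal (fun i => (((d i)⁻¹ : ℝ) : ℂ)) = 1 := by
    rw [Matrix.diagonal_mul_diagonal]
    rw [show (fun i => (d i : ℂ) * (((d i)⁻¹ : ℝ) : ℂ)) = fun _ => (1 : ℂ) by
      funext i
      push_cast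
      exact mul_inv_cancel₀ (by exact_mod_cast (hdpos i).ne')]
    exact Matrix.diagonal_one
  have hspecinv : A⁻¹ = U * diagonal (fun i => (((d i)⁻¹ : ℝ) : ℂ)) * star U := by
    refine Matrix.inv_eq_right_inv ?_
    rw [hspec]
    simp only [Matrix.mul_assoc]
    rw [← Matrix.mul_assoc (star U) U, hU1, Matrix.one_mul,
      ← Matrix.mul_assoc (diagonal _) (diagonal _), hDD, Matrix.one_mul, hU2]
  have e1 : (star x ⬝ᵥ A *ᵥ x).re = ∑ i, d i * n i := by
    rw [hspec, quad_conj, ← hc, diag_form]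
  have e2 : (star x ⬝ᵥ A⁻¹ *ᵥ x).re = ∑ i, (d i)⁻¹ * n i := by
    rw [hspecinv, quad_conj, ← hc, diag_form]
  have e3 : (star x ⬝ᵥ x).re = ∑ i, n i := by
    have h0 : star x ⬝ᵥ x = star c ⬝ᵥ (diagonal (fun i => ((1 : ℝ) : ℂ))) *ᵥ c := by
      rw [hc, ← quad_conj]
      rw [show (diagonal (fun _ : Fin p => ((1:ℝ):ℂ))) = (1 : Matrix (Fin p) (Fin p) ℂ) by
        simp [Matrix.diagonal_one], Matrix.mul_one, hU2, Matrix.one_mulVec]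
    rw [h0, diag_form]
    simp only [one_mul]
    rfl
  rw [e1, e2, e3]
  have hnn : ∀ i, 0 ≤ n i := fun i => Complex.normSq_nonneg _
  set S1 := ∑ i, d i * n i with hS1
  set S2 := ∑ i, (d i)⁻¹ * n i with hS2
  set S0 := ∑ i, n i with hS0
  have hS1n : 0 ≤ S1 := Finset.sum_nonneg fun i _ => mul_nonneg (hdpos i).le (hnn i)
  have hS2n : 0 ≤ S2 := Finset.sum_nonneg fun i _ =>
    mul_nonneg (inv_nonneg.2 (hdpos i).le) (hnn i)
  have hS0n : 0 ≤ S0 := Finset.sum_nonneg fun i _ => hnn i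
  have hkey : S2 * (M * m) + S1 ≤ (M + m) * S0 := by
    rw [hS1, hS2, hS0, Finset.sum_mul, ← Finset.sum_add_distrib, Finset.mul_sum]
    apply Finset.sum_le_sum
    intro i _
    have hdi := hdpos i
    have h1 : 0 ≤ (M - d i) * (d i - m) :=
      mul_nonneg (sub_nonneg.2 (hhi i)) (sub_nonneg.2 (hlo i))
    have h3 : M * m + d i ^ 2 ≤ (M + m) * d i := by nlinarith [h1]
    have hscal : (d i)⁻¹ * (M * m) + d i ≤ M + m := by
      have h4 : (d i)⁻¹ * (M * m) + d i = (M * m + d i ^ 2) * (d i)⁻¹ := by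
        field_simp
      have h5 : (M * m + d i ^ 2) * (d i)⁻¹ ≤ ((M + m) * d i) * (d i)⁻¹ :=
        mul_le_mul_of_nonneg_right h3 (inv_nonneg.2 hdi.le)
      have h6 : ((M + m) * d i) * (d i)⁻¹ = M + m := by field_simp
      linarith [h4 ▸ (h6 ▸ h5)]
    calc (d i)⁻¹ * n i * (M * m) + d i * n i
        = ((d i)⁻¹ * (M * m) + d i) * n i := by ring
      _ ≤ (M + m) * n i := mul_le_mul_of_nonneg_right hscal (hnn i)
  have hsq := mul_self_le_mul_self (by positivity : (0:ℝ) ≤ S2 * (M * m) + S1) hkey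
  rw [div_mul_eq_mul_div, le_div_iff₀ (by positivity)]
  nlinarith [hsq, sq_nonneg (S1 - S2 * (M * m)), mul_nonneg hS1n hS2n]

theorem scnr_lower_bound' {p : ℕ} (hp : 0 < p)
    (R Rb : Matrix (Fin p) (Fin p) ℂ) (hR : R.PosDef) (hRb : Rb.PosDef)
    (y : Fin p → ℂ) (hy : y ≠ 0)
    (S : Matrix (Fin p) (Fin p) ℂ) (hS : S.PosDef) (hSsq : S * S = Rb)
    (A : Matrix (Fin p) (Fin p) ℂ) (hA : A = S⁻¹ * R * S⁻¹) (hApd : A.PosDef)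
    (κ : ℝ)
    (hκ : κ = (⨆ i, hApd.isHermitian.eigenvalues i) / (⨅ i, hApd.isHermitian.eigenvalues i)) :
    1 / ((1 / 4) * (κ + 1 / κ + 2)) ≤
      (((star y ⬝ᵥ Rb⁻¹ *ᵥ y).re) ^ 2 /
        ((star y ⬝ᵥ R⁻¹ *ᵥ y).re * (star y ⬝ᵥ (Rb⁻¹ * R * Rb⁻¹) *ᵥ y).re)) ∧
    1 / ((1 / 4) * (κ + 1 / κ + 2)) = 4 * κ / (κ + 1) ^ 2 := by
  classical
  haveI : Nonempty (Fin p) := ⟨⟨0, hp⟩⟩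
  -- eigenvalue bounds
  set lam : Fin p → ℝ := hApd.isHermitian.eigenvalues with hlam
  set M : ℝ := ⨆ i, lam i with hMdef
  set m : ℝ := ⨅ i, lam i with hmdef
  have hlo : ∀ i, m ≤ lam i := fun i =>
    ciInf_le (Set.Finite.bddBelow (Set.finite_range _)) i
  have hhi : ∀ i, lam i ≤ M := fun i =>
    le_ciSup (Set.Finite.bddAbove (Set.finite_range _)) i
  have hm : 0 < m := by
    obtain ⟨i, hi⟩ := exists_eq_ciInf_of_finite (f := lam)
    rw [hmdef, ← hi]
    exact hApd.eigenvalues_pos i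
  have hM : 0 < M := lt_of_lt_of_le hm ((hlo (Classical.arbitrary _)).trans (hhi _))
  have hκpos : 0 < κ := hκ ▸ div_pos hM hm
  -- matrix algebra
  have hSdet : IsUnit S.det := (Matrix.isUnit_iff_isUnit_det _).mp hS.isUnit
  have hSH : Sᴴ = S := hS.isHermitian
  have hSiH : star (S⁻¹) = S⁻¹ := by
    rw [Matrix.star_eq_conjTranspose, Matrix.conjTranspose_nonsing_inv, hSH]
  have hRbinv : Rb⁻¹ = S⁻¹ * S⁻¹ := by rw [← hSsq, Matrix.mul_inv_rev]
  set x : Fin p → ℂ := S⁻¹ *ᵥ y with hx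
  have hxne : x ≠ 0 := by
    intro h0
    apply hy
    have : S *ᵥ x = y := by
      rw [hx, Matrix.mulVec_mulVec, Matrix.mul_nonsing_inv _ hSdet, Matrix.one_mulVec]
    rw [← this, h0, Matrix.mulVec_zero]
  have hAinv : A⁻¹ = S * R⁻¹ * S := by
    rw [hA, Matrix.mul_inv_rev, Matrix.mul_inv_rev, Matrix.nonsing_inv_nonsing_inv _ hSdet,
      Matrix.mul_assoc]
  have hRinv : S⁻¹ * A⁻¹ * S⁻¹ = R⁻¹ := by
    rw [hAinv]
    calc S⁻¹ * (S * R⁻¹ * S) * S⁻¹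
        = (S⁻¹ * S) * R⁻¹ * (S * S⁻¹) := by simp only [Matrix.mul_assoc]
      _ = R⁻¹ := by
          rw [Matrix.nonsing_inv_mul _ hSdet, Matrix.mul_nonsing_inv _ hSdet,
            Matrix.one_mul, Matrix.mul_one]
  have hRbRRb : Rb⁻¹ * R * Rb⁻¹ = S⁻¹ * A * S⁻¹ := by
    rw [hRbinv, hA]
    simp only [Matrix.mul_assoc]
  -- quadratic form identities
  have e1 : (star y ⬝ᵥ Rb⁻¹ *ᵥ y) = star x ⬝ᵥ x := by
    have : Rb⁻¹ = S⁻¹ * 1 * star (S⁻¹) := by rw [hSiH, Matrix.mul_one, hRbinv]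
    rw [this, quad_conj, hSiH, ← hx, Matrix.one_mulVec]
  have e2 : (star y ⬝ᵥ R⁻¹ *ᵥ y) = star x ⬝ᵥ A⁻¹ *ᵥ x := by
    have : R⁻¹ = S⁻¹ * A⁻¹ * star (S⁻¹) := by rw [hSiH, hRinv]
    rw [this, quad_conj, hSiH, ← hx]
  have e3 : (star y ⬝ᵥ (Rb⁻¹ * R * Rb⁻¹) *ᵥ y) = star x ⬝ᵥ A *ᵥ x := by
    have : Rb⁻¹ * R * Rb⁻¹ = S⁻¹ * A * star (S⁻¹) := by rw [hSiH, hRbRRb]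
    rw [this, quad_conj, hSiH, ← hx]
  -- positivity
  have P0 : 0 < (star x ⬝ᵥ x).re := by
    have := (Matrix.PosDef.one (n := Fin p) (R := ℂ)).re_dotProduct_pos hxne
    simpa using this
  have P1 : 0 < (star x ⬝ᵥ A⁻¹ *ᵥ x).re := (hApd.inv).re_dotProduct_pos hxne
  have P2 : 0 < (star x ⬝ᵥ A *ᵥ x).re := hApd.re_dotProduct_pos hxne
  -- Kantorovich
  have hkant := kantorovich A hApd x M m hm hM hlo hhi
  have hKeq : (1 / 4) * (κ + 1 / κ + 2) = (M + m) ^ 2 / (4 * (M * m)) := by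
    have hM0 := hM.ne'
    have hm0 := hm.ne'
    rw [hκ]
    field_simp
    ring
  constructor
  · rw [e1, e2, e3, hKeq]
    rw [div_le_div_iff₀ (by positivity) (by positivity)]
    calc 1 * ((star x ⬝ᵥ A⁻¹ *ᵥ x).re * (star x ⬝ᵥ A *ᵥ x).re)
        ≤ (M + m) ^ 2 / (4 * (M * m)) * ((star x ⬝ᵥ x).re) ^ 2 := by
          rw [one_mul]; exact hkant
      _ = (star x ⬝ᵥ x).re ^ 2 * ((M + m) ^ 2 / (4 * (M * m))) := by ring
  · have h1 : (1 / 4 : ℝ) * (κ + 1 / κ + 2) = (κ + 1) ^ 2 / (4 * κ) := by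
      field_simp
      ring
    rw [h1, one_div_div]

/-- Kantorovich lower bound on the normalized SCNR: with `A = R̄^{-1/2} R R̄^{-1/2}` and
`κ = κ(A)` its condition number, `ρ ≥ 1 / ((1/4)(κ + 1/κ + 2)) = 4κ/(κ+1)²`. -/
theorem scnr_lower_bound {p : ℕ} (hp : 0 < p)
    (R Rb : Matrix (Fin p) (Fin p) ℂ) (hR : R.PosDef) (hRb : Rb.PosDef)
    (y : Fin p → ℂ) (hy : y ≠ 0)
    (S : Matrix (Fin p) (Fin p) ℂ) (hS : S.PosDef) (hSsq : S * S = Rb)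
    (A : Matrix (Fin p) (Fin p) ℂ) (hA : A = S⁻¹ * R * S⁻¹) (hApd : A.PosDef)
    (κ : ℝ)
    (hκ : κ = (⨆ i, hApd.isHermitian.eigenvalues i) / (⨅ i, hApd.isHermitian.eigenvalues i)) :
    1 / ((1 / 4) * (κ + 1 / κ + 2)) ≤ scnr R Rb y ∧
    1 / ((1 / 4) * (κ + 1 / κ + 2)) = 4 * κ / (κ + 1) ^ 2 := by
  have h := scnr_lower_bound' hp R Rb hR hRb y hy S hS hSsq A hA hApd κ hκ
  unfold scnr
  exact h
end

section
/- Fix γ ∈ (0,1). Define f(y) = (y + 1 − γ + √((y + 1 − γ)² − 4y))/2, c(x) = √((1 − γ/(x−1)²)/(1 + γ/(x−1))) for x > 1+√γ (with c(x) = 0 for x ≤ 1+√γ), s(x)² = 1 − c(x)², η^St(x) = x/(c(x)² + s(x)²·x), and the shrinkage rule η*(y) = η^St(f(y)) for y > (1+√γ)² and η*(y) = 1 for y ≤ (1+√γ)². Then η* is a continuous function on ℝ; in particular, it is continuous at the bulk edge y = (1+√γ)², where its one-sided limit from the right equals 1. -/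
/-- De-biasing map `f(y) = (y+1-γ+√((y+1-γ)²-4y))/2`. -/
noncomputable def fMap (γ y : ℝ) : ℝ :=
  (y + 1 - γ + Real.sqrt ((y + 1 - γ) ^ 2 - 4 * y)) / 2

/-- Asymptotic cosine: `c(x) = √((1 - γ/(x-1)²)/(1 + γ/(x-1)))` for `x > 1+√γ`, `0` otherwise. -/
noncomputable def cFun (γ x : ℝ) : ℝ :=
  if 1 + Real.sqrt γ < x then Real.sqrt ((1 - γ / (x - 1) ^ 2) / (1 + γ / (x - 1))) else 0

/-- Stein-loss optimal shrinker `η^St(x) = x / (c(x)² + s(x)² x)` with `s(x)² = 1 - c(x)²`. -/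
noncomputable def etaSt (γ x : ℝ) : ℝ :=
  x / ((cFun γ x) ^ 2 + (1 - (cFun γ x) ^ 2) * x)

/-- Shrinkage rule: `η*(y) = η^St(f(y))` above the bulk edge `(1+√γ)²`, `1` at or below it. -/
noncomputable def etaStar (γ y : ℝ) : ℝ :=
  if (1 + Real.sqrt γ) ^ 2 < y then etaSt γ (fMap γ y) else 1

open Filter Topology Set

/-- Auxiliary: the square of `cFun` above the edge. -/
noncomputable def gFun (γ x : ℝ) : ℝ := (1 - γ / (x - 1) ^ 2) / (1 + γ / (x - 1))

lemma gFun_continuousAt {γ x : ℝ} (hγ0 : 0 < γ) (hx : 1 < x) :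
    ContinuousAt (gFun γ) x := by
  have h1 : x - 1 ≠ 0 := by intro h; nlinarith [h]
  have h2 : (x - 1) ^ 2 ≠ 0 := pow_ne_zero 2 h1
  have h3 : 0 < 1 + γ / (x - 1) := by
    have : 0 < γ / (x - 1) := div_pos hγ0 (by linarith)
    linarith
  unfold gFun
  have hp : ContinuousAt (fun z : ℝ => (z - 1) ^ 2) x :=
    (continuousAt_id.sub continuousAt_const).pow 2
  exact (ContinuousAt.sub continuousAt_const
      (continuousAt_const.div hp h2)).div
    (continuousAt_const.add
      (continuousAt_const.div (continuousAt_id.sub continuousAt_const) h1)) h3.ne'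

lemma gFun_pos {γ x : ℝ} (hγ0 : 0 < γ) (hx : 1 + Real.sqrt γ < x) :
    0 < gFun γ x := by
  have hs : Real.sqrt γ ^ 2 = γ := Real.sq_sqrt hγ0.le
  have hs0 : 0 ≤ Real.sqrt γ := Real.sqrt_nonneg γ
  have ht : Real.sqrt γ < x - 1 := by linarith
  have ht0 : (0:ℝ) < x - 1 := lt_of_le_of_lt hs0 ht
  have htsq : γ < (x - 1) ^ 2 := by nlinarith
  have h1 : γ / (x - 1) ^ 2 < 1 := (div_lt_one (by positivity)).2 htsq
  have h3 : 0 < 1 + γ / (x - 1) := by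
    have : 0 < γ / (x - 1) := div_pos hγ0 ht0
    linarith
  exact div_pos (by linarith) h3

lemma gFun_lt_one {γ x : ℝ} (hγ0 : 0 < γ) (hx : 1 + Real.sqrt γ < x) :
    gFun γ x < 1 := by
  have hs0 : 0 ≤ Real.sqrt γ := Real.sqrt_nonneg γ
  have ht0 : (0:ℝ) < x - 1 := by linarith
  have h2 : 0 < γ / (x - 1) := div_pos hγ0 ht0
  have h1 : 0 < γ / (x - 1) ^ 2 := div_pos hγ0 (by positivity)
  rw [gFun, div_lt_one (by linarith)]
  linarith

lemma cFun_sq {γ x : ℝ} (hγ0 : 0 < γ) (hx : 1 + Real.sqrt γ < x) :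
    cFun γ x ^ 2 = gFun γ x := by
  have h := (gFun_pos hγ0 hx).le
  rw [gFun] at h
  rw [cFun, if_pos hx, Real.sq_sqrt h, gFun]

lemma cFun_continuousAt {γ x : ℝ} (hγ0 : 0 < γ) (hx : 1 + Real.sqrt γ < x) :
    ContinuousAt (cFun γ) x := by
  have hx1 : 1 < x := lt_of_le_of_lt (by nlinarith [Real.sqrt_nonneg γ]) hx
  have hcg : ContinuousAt (fun z => Real.sqrt (gFun γ z)) x :=
    Real.continuous_sqrt.continuousAt.comp (gFun_continuousAt hγ0 hx1)
  apply hcg.congr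
  filter_upwards [isOpen_Ioi.mem_nhds hx] with z hz
  rw [cFun, if_pos (show 1 + Real.sqrt γ < z from hz), gFun]

lemma etaSt_denom_pos {γ x : ℝ} (hγ0 : 0 < γ) (hx : 1 + Real.sqrt γ < x) :
    0 < cFun γ x ^ 2 + (1 - cFun γ x ^ 2) * x := by
  rw [cFun_sq hγ0 hx]
  have h0 := gFun_pos hγ0 hx
  have h1 := gFun_lt_one hγ0 hx
  have hx0 : 0 < x := by nlinarith [Real.sqrt_nonneg γ]
  nlinarith

lemma etaSt_continuousAt {γ x : ℝ} (hγ0 : 0 < γ) (hx : 1 + Real.sqrt γ < x) :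
    ContinuousAt (etaSt γ) x := by
  have hc := cFun_continuousAt hγ0 hx
  exact ContinuousAt.div continuousAt_id
    (((hc.pow 2).add (((continuousAt_const.sub (hc.pow 2))).mul continuousAt_id)))
    (etaSt_denom_pos hγ0 hx).ne'

lemma gFun_edge {γ : ℝ} (hγ0 : 0 < γ) : gFun γ (1 + Real.sqrt γ) = 0 := by
  have hs : Real.sqrt γ ^ 2 = γ := Real.sq_sqrt hγ0.le
  have hs0 : Real.sqrt γ ≠ 0 := by positivity
  rw [gFun]
  have : (1 + Real.sqrt γ - 1) = Real.sqrt γ := by ring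
  rw [this, hs, div_self (by positivity), sub_self, zero_div]

lemma etaSt_tendsto_edge {γ : ℝ} (hγ0 : 0 < γ) :
    Tendsto (etaSt γ) (𝓝[>] (1 + Real.sqrt γ)) (𝓝 1) := by
  set e := 1 + Real.sqrt γ with he
  have hsp : 0 < Real.sqrt γ := Real.sqrt_pos.2 hγ0
  have he1 : (1:ℝ) < e := by rw [he]; linarith
  have hg : Tendsto (gFun γ) (𝓝[>] e) (𝓝 0) := by
    have := (gFun_continuousAt (x := e) hγ0 he1).tendsto
    rw [gFun_edge hγ0] at this
    exact this.mono_left nhdsWithin_le_nhds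
  have hc : Tendsto (cFun γ) (𝓝[>] e) (𝓝 0) := by
    have hsq : Tendsto (fun z => Real.sqrt (gFun γ z)) (𝓝[>] e) (𝓝 0) := by
      have := (Real.continuous_sqrt.tendsto 0).comp hg
      simpa [Function.comp_def] using this
    apply hsq.congr'
    filter_upwards [self_mem_nhdsWithin] with z hz
    rw [cFun, if_pos (show 1 + Real.sqrt γ < z from hz), gFun]
  have hid : Tendsto (fun z : ℝ => z) (𝓝[>] e) (𝓝 e) :=
    tendsto_id.mono_left nhdsWithin_le_nhds
  have hden : Tendsto (fun z => cFun γ z ^ 2 + (1 - cFun γ z ^ 2) * z) (𝓝[>] e)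
      (𝓝 e) := by
    have h := ((hc.pow 2).add (((tendsto_const_nhds (x := (1:ℝ))).sub (hc.pow 2)).mul hid))
    norm_num at h
    exact h
  have hne : e ≠ 0 := by linarith
  have h2 := hid.div hden hne
  rw [div_self hne] at h2
  exact h2.congr (fun z => rfl)

lemma fMap_continuous (γ : ℝ) : Continuous (fMap γ) := by
  unfold fMap; fun_prop

lemma fMap_edge {γ : ℝ} (hγ0 : 0 < γ) :
    fMap γ ((1 + Real.sqrt γ) ^ 2) = 1 + Real.sqrt γ := by
  have hs : Real.sqrt γ ^ 2 = γ := Real.sq_sqrt hγ0.le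
  have h : ((1 + Real.sqrt γ) ^ 2 + 1 - γ) ^ 2 - 4 * (1 + Real.sqrt γ) ^ 2 = 0 := by
    linear_combination (Real.sqrt γ ^ 2 - γ + 4 + 4 * Real.sqrt γ) * hs
  rw [fMap, h, Real.sqrt_zero]
  linear_combination hs / 2

lemma fMap_maps {γ y : ℝ} (hγ0 : 0 < γ) (hy : (1 + Real.sqrt γ) ^ 2 < y) :
    1 + Real.sqrt γ < fMap γ y := by
  have hs : Real.sqrt γ ^ 2 = γ := Real.sq_sqrt hγ0.le
  have hsn := Real.sqrt_nonneg ((y + 1 - γ) ^ 2 - 4 * y)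
  rw [fMap]
  nlinarith [hs, hsn]

/-- For `γ ∈ (0,1)`, the shrinkage rule `η*` is continuous on `ℝ`; in particular its
one-sided limit from the right at the bulk edge `(1+√γ)²` equals 1. -/
theorem etaStar_continuous (γ : ℝ) (hγ0 : 0 < γ) (hγ1 : γ < 1) :
    Continuous (etaStar γ) ∧
    Filter.Tendsto (etaStar γ)
      (nhdsWithin ((1 + Real.sqrt γ) ^ 2) (Set.Ioi ((1 + Real.sqrt γ) ^ 2))) (nhds 1) := by
  set e := 1 + Real.sqrt γ with he
  set E := e ^ 2 with hE
  -- fMap maps the right nbhd of E into the right nbhd of e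
  have hmaps : Tendsto (fMap γ) (𝓝[>] E) (𝓝[>] e) := by
    apply tendsto_nhdsWithin_of_tendsto_nhds_of_eventually_within
    · have := ((fMap_continuous γ).tendsto E).mono_left (nhdsWithin_le_nhds (s := Ioi E))
      rwa [show fMap γ E = e from fMap_edge hγ0] at this
    · filter_upwards [self_mem_nhdsWithin] with z hz
      exact fMap_maps hγ0 hz
  have hright : Tendsto (etaStar γ) (𝓝[>] E) (𝓝 1) := by
    have hcomp : Tendsto (fun y => etaSt γ (fMap γ y)) (𝓝[>] E) (𝓝 1) :=
      (etaSt_tendsto_edge hγ0).comp hmaps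
    apply hcomp.congr'
    filter_upwards [self_mem_nhdsWithin] with z hz
    rw [etaStar, if_pos (show (1 + Real.sqrt γ) ^ 2 < z from hz)]
  constructor
  · rw [continuous_iff_continuousAt]
    intro y
    rcases lt_trichotomy y E with h | h | h
    · -- below the edge: locally constant 1
      apply ContinuousAt.congr (continuousAt_const (y := (1:ℝ)))
      filter_upwards [isOpen_Iio.mem_nhds h] with z hz
      rw [etaStar, if_neg (not_lt.2 (le_of_lt hz))]
    · -- at the edge
      subst h
      have hval : etaStar γ E = 1 := by rw [etaStar, if_neg (lt_irrefl E)]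
      rw [ContinuousAt, hval, ← nhdsLE_sup_nhdsGT (a := E), tendsto_sup]
      constructor
      · apply Tendsto.congr' _ (tendsto_const_nhds (x := (1:ℝ)))
        filter_upwards [self_mem_nhdsWithin] with z hz
        rw [etaStar, if_neg (not_lt.2 hz)]
      · exact hright
    · -- above the edge
      have hcA : ContinuousAt (fun z => etaSt γ (fMap γ z)) y :=
        (etaSt_continuousAt hγ0 (fMap_maps hγ0 h)).comp
          ((fMap_continuous γ).continuousAt)
      apply hcA.congr
      filter_upwards [isOpen_Ioi.mem_nhds h] with z hz
      rw [etaStar, if_pos (show (1 + Real.sqrt γ) ^ 2 < z from hz)]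
  · exact hright
end
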